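/- Let Δ be a semiperfect ring, and let Λ = ⊕_{g∈G} Λ_g be a ring strongly graded by a group G with identity component Δ. If Δ is prime and basic, then Λ is a crossed product: for every g ∈ G, Λ_g ≅ Δ as left Δ-modules. -/

import Mathlib

/-
Write `1 = ∑ₗ nₗ mₗ` with `nₗ ∈ Λ_{g⁻¹}`, `mₗ ∈ Λ_g`. For each idempotent `eᵢ` of a basic
decomposition `1 = ∑ eᵢ` of `Δ`, the sum `eᵢ = ∑_{l,j} (eᵢ nₗ eⱼ)(eⱼ mₗ eᵢ)` lies in the local ring
`eᵢΔeᵢ`, so one summand is a unit there. This produces `uᵢ ∈ eⱼΛ_g eᵢ` and `wᵢ ∈ eᵢΛ_{g⁻¹}eⱼ` with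
`wᵢuᵢ = eᵢ`; then `uᵢwᵢ` is a nonzero idempotent of the local ring `eⱼΔeⱼ`, hence equals `eⱼ`, so
`Λ_g eᵢ ≅ Δeⱼ`. Since `Δ` is basic, `i ↦ j` is injective, hence a permutation, and `u = ∑ uᵢ` is a
unit of `Λ` lying in `Λ_g` with inverse `∑ wᵢ ∈ Λ_{g⁻¹}`; thus `Λ_g = Δu` freely.
-/

open Pointwise
/-- A strong grading of the ring `Λ` by the group `G`: `Λ` is the internal direct
sum of the additive subgroups `A g`, and `A g * A h = A (g * h)` for all `g, h`. -/
structure IsStrongGrading {G Λ : Type*} [Group G] [Ring Λ] [DecidableEq G]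
    (A : G → AddSubgroup Λ) : Prop where
  internal : DirectSum.IsInternal A
  one_mem : (1 : Λ) ∈ A 1
  mul_mem : ∀ (g h : G), ∀ a ∈ A g, ∀ b ∈ A h, a * b ∈ A (g * h)
  strong : ∀ g h : G, A (g * h) ≤ AddSubgroup.closure ((A g : Set Λ) * (A h : Set Λ))

/-- `Λ_g ≅ Λ_h` as `Δ`-bimodules (`Δ = Λ_1`): an additive equivalence compatible
with left and right multiplication by elements of the identity component. -/
def ComponentBimodIso {G Λ : Type*} [Group G] [Ring Λ]
    (A : G → AddSubgroup Λ) (g h : G) : Prop :=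
  ∃ f : A g ≃+ A h,
    (∀ d ∈ A (1 : G), ∀ x y : A g, (y : Λ) = d * (x : Λ) → ((f y : Λ) = d * (f x : Λ))) ∧
    (∀ d ∈ A (1 : G), ∀ x y : A g, (y : Λ) = (x : Λ) * d → ((f y : Λ) = (f x : Λ) * d))

/-- A ring is *semiperfect* iff `1` is a sum of orthogonal idempotents each of
whose corner rings `eRe` is local. -/
def IsSemiperfectRing (R : Type*) [Ring R] : Prop :=
  ∃ (n : ℕ) (e : Fin n → R),
    (∀ i, e i * e i = e i) ∧ (∀ i j, i ≠ j → e i * e j = 0) ∧ (∑ i, e i) = 1 ∧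
    ∀ i, e i ≠ 0 ∧ ∀ x : R, x = e i * x * e i →
      (∃ y : R, y = e i * y * e i ∧ x * y = e i ∧ y * x = e i) ∨
      (∃ y : R, y = e i * y * e i ∧ (e i - x) * y = e i ∧ y * (e i - x) = e i)

/-- A ring is *prime* iff `aRb = 0` implies `a = 0` or `b = 0` (and it is nonzero). -/
def IsPrimeRing (R : Type*) [Ring R] : Prop :=
  (∀ a b : R, (∀ x : R, a * x * b = 0) → a = 0 ∨ b = 0) ∧ (0 : R) ≠ 1

/-- A semiperfect ring is *basic* iff `1` is a sum of orthogonal idempotents with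
local corner rings which are pairwise non-isomorphic (no two of the corresponding
indecomposable projectives `Re i` are isomorphic, witnessed by elements
`u ∈ e i R e j`, `v ∈ e j R e i` with `uv = e i`, `vu = e j`). -/
def IsBasicSemiperfectRing (R : Type*) [Ring R] : Prop :=
  ∃ (n : ℕ) (e : Fin n → R),
    (∀ i, e i * e i = e i) ∧ (∀ i j, i ≠ j → e i * e j = 0) ∧ (∑ i, e i) = 1 ∧
    (∀ i, e i ≠ 0 ∧ ∀ x : R, x = e i * x * e i →
      (∃ y : R, y = e i * y * e i ∧ x * y = e i ∧ y * x = e i) ∨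
      (∃ y : R, y = e i * y * e i ∧ (e i - x) * y = e i ∧ y * (e i - x) = e i)) ∧
    ∀ i j, i ≠ j → ¬∃ u v : R,
      u = e i * u * e j ∧ v = e j * v * e i ∧ u * v = e i ∧ v * u = e j

section Corner

variable {R : Type*} [Ring R]

/-- `x` is a unit of the corner ring `eRe`, whose identity is `e`. -/
def IsCornerUnit (e x : R) : Prop := ∃ y, y = e * y * e ∧ x * y = e ∧ y * x = e

def IsLocalCorner (e : R) : Prop :=
  e ≠ 0 ∧ ∀ x, x = e * x * e → IsCornerUnit e x ∨ IsCornerUnit e (e - x)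

/-- `u ∈ eRf` and `v ∈ fRe` are mutually inverse, so right multiplication by them gives
`Re ≅ Rf`. -/
def IsCornerIso (e f u v : R) : Prop := u = e * u * f ∧ v = f * v * e ∧ u * v = e ∧ v * u = f

variable {e f h x : R}

lemma IsIdempotentElem.eq_mul_mul_iff (he : IsIdempotentElem e) (hf : IsIdempotentElem f) :
    x = e * x * f ↔ e * x = x ∧ x * f = x := by
  refine ⟨fun hx => ⟨?_, ?_⟩, fun ⟨h₁, h₂⟩ => by rw [h₁, h₂]⟩ <;> rw [hx]
  · simp only [← mul_assoc, he.eq]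
  · simp only [mul_assoc, hf.eq]

lemma IsIdempotentElem.isCornerUnit_self (he : IsIdempotentElem e) : IsCornerUnit e e :=
  ⟨e, by rw [he.eq, he.eq], he.eq, he.eq⟩

namespace IsLocalCorner

variable (hloc : IsLocalCorner e) (he : IsIdempotentElem e)
include hloc he

lemma eq_zero_or_eq_of_isIdempotentElem {q : R} (hq : q = e * q * e)
    (hqq : IsIdempotentElem q) : q = 0 ∨ q = e := by
  have heq : e * q = q := ((he.eq_mul_mul_iff he).1 hq).1
  rcases hloc.2 q hq with ⟨y, -, -, hyq⟩ | ⟨y, -, -, hyq⟩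
  · right
    calc q = y * q * q := by rw [hyq, heq]
      _ = e := by rw [mul_assoc, hqq.eq, hyq]
  · left
    calc q = y * (e - q) * q := by rw [hyq, heq]
      _ = 0 := by rw [mul_assoc, sub_mul, heq, hqq.eq, sub_self, mul_zero]

/-- In a local corner a one-sided inverse is two-sided: `x * r` is an idempotent of `eRe`,
and it is not `0` since `e = r * (x * r) * x`. -/
lemma isCornerUnit_of_mul_eq {r : R} (hx : x = e * x * e) (hr : r = e * r * e)
    (hrx : r * x = e) : IsCornerUnit e x := by
  obtain ⟨hex, hxe⟩ := (he.eq_mul_mul_iff he).1 hx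
  obtain ⟨her, hre⟩ := (he.eq_mul_mul_iff he).1 hr
  have hq : x * r = e * (x * r) * e := by rw [← mul_assoc, hex, mul_assoc, hre]
  have hqq : IsIdempotentElem (x * r) := by
    rw [IsIdempotentElem, mul_assoc, ← mul_assoc r, hrx, ← mul_assoc, hxe]
  refine ⟨r, hr, (hloc.eq_zero_or_eq_of_isIdempotentElem he hq hqq).resolve_left ?_, hrx⟩
  intro h0
  apply hloc.1
  calc e = r * (x * r) * x := by rw [← mul_assoc r x r, hrx, her, hrx]
    _ = 0 := by rw [h0, mul_zero, zero_mul]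

lemma isCornerUnit_or_of_add {a b : R} (ha : a = e * a * e) (hb : b = e * b * e)
    (hab : IsCornerUnit e (a + b)) : IsCornerUnit e a ∨ IsCornerUnit e b := by
  obtain ⟨y, hy, -, hyab⟩ := hab
  have hcorner : ∀ {z c : R}, z = e * z * e → c = e * c * e → z * c = e * (z * c) * e :=
    fun hz hc => by
      rw [← mul_assoc, ((he.eq_mul_mul_iff he).1 hz).1, mul_assoc, ((he.eq_mul_mul_iff he).1 hc).2]
  rcases hloc.2 (y * a) (hcorner hy ha) with ⟨z, hz, -, hzya⟩ | ⟨z, hz, -, hzyb⟩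
  · exact .inl (hloc.isCornerUnit_of_mul_eq he ha (hcorner hz hy) (by rw [mul_assoc, hzya]))
  · rw [show e - y * a = y * b by rw [← hyab, mul_add, add_sub_cancel_left]] at hzyb
    exact .inr (hloc.isCornerUnit_of_mul_eq he hb (hcorner hz hy) (by rw [mul_assoc, hzyb]))

lemma exists_isCornerUnit_of_sum {κ : Type*} {s : Finset κ} {a : κ → R}
    (ha : ∀ p ∈ s, a p = e * a p * e) (hs : IsCornerUnit e (∑ p ∈ s, a p)) :
    ∃ p ∈ s, IsCornerUnit e (a p) := by
  induction s using Finset.cons_induction with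
  | empty =>
    obtain ⟨y, -, hy, -⟩ := hs
    exact absurd (by rw [← hy, Finset.sum_empty, zero_mul]) hloc.1
  | cons p s hp ih =>
    rw [Finset.sum_cons] at hs
    have hsum : ∑ p ∈ s, a p = e * (∑ p ∈ s, a p) * e := by
      rw [Finset.mul_sum, Finset.sum_mul]
      exact Finset.sum_congr rfl fun q hq => ha q (Finset.mem_cons_of_mem hq)
    rcases hloc.isCornerUnit_or_of_add he (ha p (Finset.mem_cons_self p s)) hsum hs with h | h
    · exact ⟨p, Finset.mem_cons_self p s, h⟩
    · obtain ⟨q, hq, hq'⟩ := ih (fun q hq => ha q (Finset.mem_cons_of_mem hq)) h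
      exact ⟨q, Finset.mem_cons_of_mem hq, hq'⟩

end IsLocalCorner

namespace IsCornerIso

lemma symm {u v : R} (h : IsCornerIso e f u v) : IsCornerIso f e v u :=
  ⟨h.2.1, h.1, h.2.2.2, h.2.2.1⟩

lemma trans (he : IsIdempotentElem e) (hf : IsIdempotentElem f) (hh : IsIdempotentElem h)
    {u v u' v' : R} (h₁ : IsCornerIso e f u v) (h₂ : IsCornerIso f h u' v') :
    IsCornerIso e h (u * u') (v' * v) := by
  obtain ⟨hu, hv, huv, hvu⟩ := h₁
  obtain ⟨hu', hv', huv', hvu'⟩ := h₂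
  obtain ⟨heu, huf⟩ := (he.eq_mul_mul_iff hf).1 hu
  obtain ⟨-, hve⟩ := (hf.eq_mul_mul_iff he).1 hv
  obtain ⟨-, hu'h⟩ := (hf.eq_mul_mul_iff hh).1 hu'
  obtain ⟨hhv', hv'f⟩ := (hh.eq_mul_mul_iff hf).1 hv'
  refine ⟨(he.eq_mul_mul_iff hh).2 ⟨by rw [← mul_assoc, heu], by rw [mul_assoc, hu'h]⟩,
    (hh.eq_mul_mul_iff he).2 ⟨by rw [← mul_assoc, hhv'], by rw [mul_assoc, hve]⟩, ?_, ?_⟩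
  · rw [mul_assoc, ← mul_assoc u', huv', ← mul_assoc, huf, huv]
  · rw [mul_assoc, ← mul_assoc v, hvu, ← mul_assoc, hv'f, hvu']

end IsCornerIso

end Corner

lemma IsCornerIso.of_map {R S : Type*} [Ring R] [Ring S] {φ : R →+* S}
    (hφ : Function.Injective φ) {e f u v : R}
    (h : IsCornerIso (φ e) (φ f) (φ u) (φ v)) : IsCornerIso e f u v := by
  simpa only [IsCornerIso, ← map_mul, hφ.eq_iff] using h

lemma IsLocalCorner.isCornerIso_of_mul_eq {Λ : Type*} [Ring Λ] {D : Subring Λ} {f : D}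
    (hf : IsLocalCorner f) (hfi : IsIdempotentElem f) {e : Λ} (he : IsIdempotentElem e)
    (he0 : e ≠ 0) {u w : Λ} (huw : u * w ∈ D) (hu : u = f * u * e) (hw : w = e * w * f)
    (hwu : w * u = e) : IsCornerIso (f : Λ) e u w := by
  have hf' : IsIdempotentElem (f : Λ) := congrArg Subtype.val hfi
  obtain ⟨hfu, hue⟩ := (hf'.eq_mul_mul_iff he).1 hu
  obtain ⟨-, hwf⟩ := (he.eq_mul_mul_iff hf').1 hw
  let q : D := ⟨u * w, huw⟩
  have hq : q = f * q * f := Subtype.ext <|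
    (hf'.eq_mul_mul_iff hf').2 ⟨by rw [← mul_assoc, hfu], by rw [mul_assoc, hwf]⟩
  have hqq : IsIdempotentElem q := Subtype.ext <|
    show u * w * (u * w) = u * w by rw [mul_assoc, ← mul_assoc w, hwu, ← mul_assoc, hue]
  have hq0 : q ≠ 0 := fun h0 => he0 <| by
    calc e = w * (u * w) * u := by rw [← mul_assoc w u w, hwu, mul_assoc, hwu, he.eq]
      _ = 0 := by rw [show u * w = 0 from congrArg Subtype.val h0, mul_zero, zero_mul]
  exact ⟨hu, hw, congrArg Subtype.val
    ((hf.eq_zero_or_eq_of_isIdempotentElem hfi hq hqq).resolve_left hq0), hwu⟩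

namespace OrthogonalIdempotents

variable {R ι κ : Type*} [Ring R] [Fintype ι] {e : κ → R}

lemma sum_mul_sum_eq (he : OrthogonalIdempotents e) {τ : ι → κ} (hτ : Function.Injective τ)
    {a b : ι → R} (ha : ∀ i, a i * e (τ i) = a i) (hb : ∀ i, e (τ i) * b i = b i) :
    (∑ i, a i) * (∑ i, b i) = ∑ i, a i * b i := by
  rw [Finset.sum_mul_sum]
  refine Finset.sum_congr rfl fun i _ => Finset.sum_eq_single i (fun j _ hji => ?_) (by simp)
  rw [← ha i, ← hb j, mul_assoc, ← mul_assoc (e _), he.ortho (hτ.ne hji.symm), zero_mul,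
    mul_zero]

end OrthogonalIdempotents

lemma CompleteOrthogonalIdempotents.sum_mul_sum_of_isCornerIso {R ι : Type*} [Ring R]
    [Fintype ι] {e : ι → R} (he : CompleteOrthogonalIdempotents e) (σ : ι ≃ ι) {u v : ι → R}
    (h : ∀ i, IsCornerIso (e (σ i)) (e i) (u i) (v i)) :
    (∑ i, u i) * (∑ i, v i) = 1 ∧ (∑ i, v i) * (∑ i, u i) = 1 := by
  have hcorner i := ((he.idem (σ i)).eq_mul_mul_iff (he.idem i)).1 (h i).1
  have hcorner' i := ((he.idem i).eq_mul_mul_iff (he.idem (σ i))).1 (h i).2.1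
  constructor
  · rw [he.sum_mul_sum_eq Function.injective_id (fun i => (hcorner i).2)
      (fun i => (hcorner' i).1), ← he.complete, ← σ.sum_comp e]
    exact Finset.sum_congr rfl fun i _ => (h i).2.2.1
  · rw [he.sum_mul_sum_eq σ.injective (fun i => (hcorner' i).2) (fun i => (hcorner i).1),
      ← he.complete]
    exact Finset.sum_congr rfl fun i _ => (h i).2.2.2

lemma AddSubgroup.exists_sum_mul_eq_of_mem_closure {R : Type*} [Ring R] {T : AddSubgroup R}
    {U : Set R} {x : R} (hx : x ∈ closure ((T : Set R) * U)) :
    ∃ (k : ℕ) (t u : Fin k → R), (∀ l, t l ∈ T) ∧ (∀ l, u l ∈ U) ∧ ∑ l, t l * u l = x := by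
  rw [← Submodule.span_int_eq_addSubgroupClosure, Submodule.mem_toAddSubgroup,
    Submodule.mem_span_set'] at hx
  obtain ⟨k, c, p, rfl⟩ := hx
  choose t ht u hu htu using fun l => Set.mem_mul.1 (p l).2
  exact ⟨k, fun l => c l • t l, u, fun l => zsmul_mem (ht l) _, hu,
    by simp only [smul_mul_assoc, htu]⟩

namespace IsStrongGrading

variable {G Λ : Type*} [Group G] [Ring Λ] [DecidableEq G] {A : G → AddSubgroup Λ}

lemma mul_mem' (hA : IsStrongGrading A) {g h k : G} (hk : g * h = k) {a b : Λ} (ha : a ∈ A g)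
    (hb : b ∈ A h) : a * b ∈ A k :=
  hk ▸ hA.mul_mem g h a ha b hb

lemma exists_sum_mul_eq_one (hA : IsStrongGrading A) (g : G) :
    ∃ (k : ℕ) (n m : Fin k → Λ), (∀ l, n l ∈ A g⁻¹) ∧ (∀ l, m l ∈ A g) ∧ ∑ l, n l * m l = 1 :=
  AddSubgroup.exists_sum_mul_eq_of_mem_closure <|
    hA.strong g⁻¹ g (by rw [inv_mul_cancel]; exact hA.one_mem)

variable {D : Subring Λ} {ι : Type*} [Fintype ι] {e : ι → D}

lemma exists_mul_eq_of_isLocalCorner (hA : IsStrongGrading A) (hD : (D : Set Λ) = A 1)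
    (he : CompleteOrthogonalIdempotents e) {i : ι} (hi : IsLocalCorner (e i)) (g : G) :
    ∃ j, ∃ w ∈ A g⁻¹, ∃ u ∈ A g, w = e i * w * e j ∧ u = e j * u * e i ∧ w * u = e i := by
  have hDA {x : Λ} : x ∈ D ↔ x ∈ A 1 := Set.ext_iff.1 hD x
  have hE : CompleteOrthogonalIdempotents (fun j => (e j : Λ)) := he.map D.subtype
  have hEA j : (e j : Λ) ∈ A 1 := hDA.1 (e j).2
  have hE' j (X : Λ) : (e j : Λ) * (e j * X) = e j * X := by rw [← mul_assoc, (hE.idem j).eq]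
  obtain ⟨k, n, m, hn, hm, hnm⟩ := hA.exists_sum_mul_eq_one g
  set w : Fin k × ι → Λ := fun p => e i * n p.1 * e p.2
  set u : Fin k × ι → Λ := fun p => e p.2 * m p.1 * e i
  have hw p : w p ∈ A g⁻¹ :=
    hA.mul_mem' (mul_one _) (hA.mul_mem' (one_mul _) (hEA i) (hn p.1)) (hEA p.2)
  have hu p : u p ∈ A g :=
    hA.mul_mem' (mul_one _) (hA.mul_mem' (one_mul _) (hEA p.2) (hm p.1)) (hEA i)
  let a : Fin k × ι → D := fun p =>
    ⟨w p * u p, hDA.2 (hA.mul_mem' (inv_mul_cancel g) (hw p) (hu p))⟩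
  have ha p (_ : p ∈ Finset.univ) : a p = e i * a p * e i := Subtype.ext <|
    ((hE.idem i).eq_mul_mul_iff (hE.idem i)).2
      ⟨by simp only [a, w, mul_assoc, hE'], by simp only [a, u, mul_assoc, (hE.idem i).eq]⟩
  have hsum : ∑ p, a p = e i := Subtype.ext <| by
    rw [AddSubmonoidClass.coe_finsetSum]
    calc ∑ p, (a p : Λ) = e i * (∑ l, n l * ((∑ j, (e j : Λ)) * m l)) * e i := by
          simp only [a, w, u, Fintype.sum_prod_type, Finset.mul_sum, Finset.sum_mul, mul_assoc,
            hE']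
      _ = e i := by rw [hE.complete]; simp only [one_mul, hnm, mul_one, (hE.idem i).eq]
  obtain ⟨p, -, t, ht, hat, -⟩ :=
    hi.exists_isCornerUnit_of_sum (he.idem i) ha (hsum ▸ (he.idem i).isCornerUnit_self)
  have hte : (t : Λ) * e i = t :=
    (((hE.idem i).eq_mul_mul_iff (hE.idem i)).1 (congrArg Subtype.val ht)).2
  have hat' : w p * u p * t = e i := congrArg Subtype.val hat
  refine ⟨p.2, w p, hw p, u p * t, hA.mul_mem' (mul_one g) (hu p) (hDA.1 t.2), ?_, ?_,
    by rw [← mul_assoc, hat']⟩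
  · simp only [w, mul_assoc, hE', (hE.idem _).eq]
  · simp only [u, mul_assoc, hE', hte]

lemma exists_isCornerIso (hA : IsStrongGrading A) (hD : (D : Set Λ) = A 1)
    (he : CompleteOrthogonalIdempotents e) (hloc : ∀ i, IsLocalCorner (e i)) (g : G) (i : ι) :
    ∃ j, ∃ u ∈ A g, ∃ w ∈ A g⁻¹, IsCornerIso (e j : Λ) (e i) u w := by
  obtain ⟨j, w, hw, u, hu, hwc, huc, hwu⟩ := hA.exists_mul_eq_of_isLocalCorner hD he (hloc i) g
  refine ⟨j, u, hu, w, hw, (hloc j).isCornerIso_of_mul_eq (he.idem j) ((he.idem i).map D.subtype)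
    (fun h => (hloc i).1 (Subtype.ext h)) ?_ huc hwc hwu⟩
  exact (Set.ext_iff.1 hD _).2 (hA.mul_mem' (mul_inv_cancel g) hu hw)

end IsStrongGrading

lemma eq_of_isCornerIso_of_isCornerIso {Λ ι : Type*} [Ring Λ] {D : Subring Λ} {e : ι → D}
    (he : OrthogonalIdempotents e) (hbasic : ∀ i j, i ≠ j → ¬∃ u v, IsCornerIso (e i) (e j) u v)
    {f : Λ} (hf : IsIdempotentElem f) {i i' : ι} {u w u' w' : Λ}
    (h : IsCornerIso f (e i) u w) (h' : IsCornerIso f (e i') u' w')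
    (hwu' : w * u' ∈ D) (hw'u : w' * u ∈ D) : i = i' := by
  by_contra hii
  exact hbasic i i' hii ⟨⟨w * u', hwu'⟩, ⟨w' * u, hw'u⟩, IsCornerIso.of_map Subtype.val_injective
    (h.symm.trans ((he.idem i).map D.subtype) hf ((he.idem i').map D.subtype) h')⟩

theorem crossedProduct_of_prime_basic_general {G Λ : Type*} [Group G] [Ring Λ] [DecidableEq G]
    (A : G → AddSubgroup Λ) (hA : IsStrongGrading A)
    (D : Subring Λ) (hD : (D : Set Λ) = (A (1 : G) : Set Λ))
    (hbasic : IsBasicSemiperfectRing D) :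
    ∀ g : G, ∃ u ∈ A g,
      (∀ x ∈ A g, ∃ d ∈ A (1 : G), x = d * u) ∧
      (∀ d ∈ A (1 : G), d * u = 0 → d = 0) := by
  intro g
  obtain ⟨n, e, hidem, horth, hsum, hloc, hnoniso⟩ := hbasic
  have he : CompleteOrthogonalIdempotents e := ⟨⟨hidem, fun i j => horth i j⟩, hsum⟩
  choose k u hu w hw hiso using hA.exists_isCornerIso hD he hloc g
  have hk : Function.Injective k := fun i i' hii' =>
    eq_of_isCornerIso_of_isCornerIso he.toOrthogonalIdempotents hnoniso
      ((he.idem (k i)).map D.subtype) (hiso i) (hii' ▸ hiso i')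
      ((Set.ext_iff.1 hD _).2 (hA.mul_mem' (inv_mul_cancel g) (hw i) (hu i')))
      ((Set.ext_iff.1 hD _).2 (hA.mul_mem' (inv_mul_cancel g) (hw i') (hu i)))
  obtain ⟨huw, hwu⟩ := (he.map D.subtype).sum_mul_sum_of_isCornerIso
    (Equiv.ofBijective k hk.bijective_of_finite) hiso
  refine ⟨∑ i, u i, sum_mem fun i _ => hu i, fun x hx => ⟨x * ∑ i, w i,
    hA.mul_mem' (mul_inv_cancel g) hx (sum_mem fun i _ => hw i), by rw [mul_assoc, hwu, mul_one]⟩,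
    fun d _ hd => ?_⟩
  calc d = d * (∑ i, u i) * ∑ i, w i := by rw [mul_assoc, huw, mul_one]
    _ = 0 := by rw [hd, zero_mul]

/-- Let `Λ` be strongly `G`-graded with identity component
`Δ = Λ_1` semiperfect. If `Δ` is prime and basic, then `Λ` is a crossed product:
each `Λ_g` is free of rank one as a left `Δ`-module, i.e. `Λ_g = Δu` for some
`u` with trivial left annihilator in `Δ`. -/
theorem crossedProduct_of_prime_basic {G Λ : Type*} [Group G] [Ring Λ] [DecidableEq G]
    (A : G → AddSubgroup Λ) (hA : IsStrongGrading A)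
    (D : Subring Λ) (hD : (D : Set Λ) = (A (1 : G) : Set Λ))
    (hsp : IsSemiperfectRing D) (hprime : IsPrimeRing D)
    (hbasic : IsBasicSemiperfectRing D) :
    ∀ g : G, ∃ u ∈ A g,
      (∀ x ∈ A g, ∃ d ∈ A (1 : G), x = d * u) ∧
      (∀ d ∈ A (1 : G), d * u = 0 → d = 0) :=
  crossedProduct_of_prime_basic_general A hA D hD hbasic
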